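/- For integers k, j ≥ 1 and μ > −1, z ∂/∂z Q^μ_{k,j}(z,w) − k Q^μ_{k,j}(z,w) = (kj/(μ+1)) Q^{μ+1}_{k−1,j−1}(z,w); and for integers k, j ≥ 0 and μ > 0, (1−zw) z ∂/∂z Q^μ_{k,j}(z,w) + [(j+1)(1−zw) − μ zw] Q^μ_{k,j}(z,w) = −μ Q^{μ−1}_{k+1,j+1}(z,w). These are identities of bivariate polynomials in (z,w). -/

import Mathlib

noncomputable def jacobiP (α β : ℝ) (n : ℕ) : Polynomial ℝ :=
  (n.factorial : ℝ)⁻¹ •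
    ∑ k ∈ Finset.range (n + 1),
      ((n.choose k : ℝ) * ((ascPochhammer ℝ (n - k)).eval ((k : ℝ) + α + 1)) *
          ((ascPochhammer ℝ k).eval ((n : ℝ) + α + β + 1))) •
        ((Polynomial.X - 1) * Polynomial.C (2⁻¹ : ℝ)) ^ k

noncomputable def zernikeQ (μ : ℝ) (k j : ℕ) : MvPolynomial (Fin 2) ℂ :=
  if j ≤ k then
    MvPolynomial.C ((((j.factorial : ℝ) / ((ascPochhammer ℝ j).eval (μ + 1)) : ℝ) : ℂ)) *
      MvPolynomial.X 0 ^ (k - j) *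
      Polynomial.aeval (2 * MvPolynomial.X 0 * MvPolynomial.X 1 - 1)
        (jacobiP μ ((k - j : ℕ) : ℝ) j)
  else
    MvPolynomial.C ((((k.factorial : ℝ) / ((ascPochhammer ℝ k).eval (μ + 1)) : ℝ) : ℂ)) *
      MvPolynomial.X 1 ^ (j - k) *
      Polynomial.aeval (2 * MvPolynomial.X 0 * MvPolynomial.X 1 - 1)
        (jacobiP μ ((j - k : ℕ) : ℝ) k)

/-!
Put `x = zw - 1`, so that `t = 2zw - 1` becomes `x = (t - 1)/2`, and write `k = n + a`, `j = n + b`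
with `n = min k j`. Then `Q^μ_{k,j} = z^a w^b R(zw - 1)`, where `R` is `n!/(μ+1)_n` times the Jacobi
polynomial `P_n^{(μ, a+b)}` written in the variable `x`. The Euler operator acts by
`z ∂_z (z^a w^b R(zw - 1)) = z^a w^b (a R + (x + 1) R')(zw - 1)`, so both ladder identities
reduce to two one-variable identities for Jacobi polynomials in `x`, which hold coefficientwise by
`(c)_{m+1} = c (c+1)_m = (c)_m (c + m)`. The normalising constants match because `a b = 0`.
-/

section Jacobi

open Polynomial

theorem ascPochhammer_succ_eval_left {S : Type*} [CommSemiring S] (n : ℕ) (x : S) :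
    (ascPochhammer S (n + 1)).eval x = x * (ascPochhammer S n).eval (x + 1) := by
  simp [ascPochhammer_succ_left, eval_comp]

noncomputable def jacobiCoeff (α β : ℝ) (n i : ℕ) : ℝ :=
  (n.factorial : ℝ)⁻¹ * n.choose i * (ascPochhammer ℝ (n - i)).eval (i + α + 1) *
    (ascPochhammer ℝ i).eval (n + α + β + 1)

/-- `P_n^{(α,β)}` as a polynomial in `x = (t - 1) / 2`. -/
noncomputable def jacobiX (α β : ℝ) (n : ℕ) : ℝ[X] :=
  ∑ i ∈ Finset.range (n + 1), C (jacobiCoeff α β n i) * X ^ i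

theorem jacobiCoeff_eq_zero_of_lt {α β : ℝ} {n i : ℕ} (h : n < i) : jacobiCoeff α β n i = 0 := by
  simp [jacobiCoeff, Nat.choose_eq_zero_of_lt h]

theorem coeff_jacobiX (α β : ℝ) (n i : ℕ) :
    (jacobiX α β n).coeff i = jacobiCoeff α β n i := by
  simp only [jacobiX, finsetSum_coeff, coeff_C_mul_X_pow, Finset.sum_ite_eq,
    Finset.mem_range, Nat.lt_succ_iff]
  split_ifs with h
  · rfl
  · exact (jacobiCoeff_eq_zero_of_lt (not_le.mp h)).symm

theorem jacobiP_eq_comp (α β : ℝ) (n : ℕ) :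
    jacobiP α β n = (jacobiX α β n).comp ((X - 1) * C 2⁻¹) := by
  simp only [jacobiP, jacobiX, sum_comp, Finset.smul_sum, mul_comp, C_comp, X_pow_comp,
    smul_eq_C_mul]
  refine Finset.sum_congr rfl fun i _ => ?_
  simp only [jacobiCoeff, map_mul]
  ring

theorem aeval_jacobiP {A : Type*} [CommRing A] [Algebra ℝ A] (α β : ℝ) (n : ℕ) (s : A) :
    aeval (2 * s - 1 : A) (jacobiP α β n) = aeval (s - 1 : A) (jacobiX α β n) := by
  have half : algebraMap ℝ A 2⁻¹ * 2 = 1 := by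
    rw [← map_ofNat (algebraMap ℝ A) 2, ← map_mul, inv_mul_cancel₀ two_ne_zero, map_one]
  have shift : aeval (2 * s - 1) ((X - 1) * C (2⁻¹ : ℝ)) = s - 1 := by
    simp only [map_mul, map_sub, aeval_X, aeval_C, map_one]
    linear_combination (s - 1) * half
  rw [jacobiP_eq_comp, aeval_comp, shift]

theorem jacobiCoeff_add (α β : ℝ) (i m : ℕ) :
    jacobiCoeff α β (i + m) i = ((i.factorial : ℝ) * m.factorial)⁻¹ *
      (ascPochhammer ℝ m).eval (i + α + 1) * (ascPochhammer ℝ i).eval (i + m + α + β + 1) := by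
  rw [jacobiCoeff, Nat.add_sub_cancel_left, Nat.cast_add_choose]
  push_cast
  field_simp

theorem jacobiCoeff_lower (α β : ℝ) (n i : ℕ) :
    (i + 1) * jacobiCoeff α β (n + 1) (i + 1) + (i - (n + 1)) * jacobiCoeff α β (n + 1) i =
      (n + 1 + β) * jacobiCoeff (α + 1) β n i := by
  rcases le_or_gt i n with hi | hi
  · obtain ⟨m, rfl⟩ := Nat.exists_eq_add_of_le hi
    rw [show i + m + 1 = i + 1 + m by omega, jacobiCoeff_add, show i + 1 + m = i + (m + 1) by omega,
      jacobiCoeff_add, jacobiCoeff_add, ascPochhammer_succ_eval, ascPochhammer_succ_eval_left,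
      Nat.factorial_succ, Nat.factorial_succ]
    push_cast
    field_simp
    ring_nf
  · rw [jacobiCoeff_eq_zero_of_lt (by omega : n + 1 < i + 1), jacobiCoeff_eq_zero_of_lt hi]
    obtain rfl | hi' := (Nat.succ_le_of_lt hi).eq_or_lt
    · push_cast; ring
    · rw [jacobiCoeff_eq_zero_of_lt hi']; ring

theorem jacobiCoeff_raise (α β : ℝ) (n i : ℕ) :
    (i + n + α + β + 1) * jacobiCoeff α β n i + (i + 1 + α) * jacobiCoeff α β n (i + 1) =
      (n + 1) * jacobiCoeff (α - 1) β (n + 1) (i + 1) := by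
  rcases lt_trichotomy i n with hi | rfl | hi
  · obtain ⟨m, rfl⟩ := Nat.exists_eq_add_of_lt hi
    rw [show i + m + 1 = i + (m + 1) by omega, jacobiCoeff_add,
      show i + (m + 1) = i + 1 + m by omega, jacobiCoeff_add,
      show i + 1 + m + 1 = i + 1 + (m + 1) by omega, jacobiCoeff_add]
    simp only [ascPochhammer_succ_eval i, ascPochhammer_succ_eval_left m, Nat.factorial_succ]
    push_cast
    field_simp
    ring_nf
  · rw [jacobiCoeff_eq_zero_of_lt (Nat.lt_succ_self i)]
    have h := jacobiCoeff_add α β i 0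
    have h' := jacobiCoeff_add (α - 1) β (i + 1) 0
    simp only [add_zero] at h h'
    rw [h, h', ascPochhammer_succ_eval, Nat.factorial_succ]
    push_cast
    field_simp
    ring_nf
  · rw [jacobiCoeff_eq_zero_of_lt hi, jacobiCoeff_eq_zero_of_lt (by omega : n < i + 1),
      jacobiCoeff_eq_zero_of_lt (by omega : n + 1 < i + 1)]
    ring

theorem jacobiCoeff_raise_zero (α β : ℝ) (n : ℕ) :
    α * jacobiCoeff α β n 0 = (n + 1) * jacobiCoeff (α - 1) β (n + 1) 0 := by
  have h := jacobiCoeff_add α β 0 n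
  have h' := jacobiCoeff_add (α - 1) β 0 (n + 1)
  simp only [zero_add] at h h'
  rw [h, h', ascPochhammer_succ_eval_left, Nat.factorial_succ]
  push_cast
  field_simp
  ring_nf

theorem coeff_X_add_one_mul_derivative {R : Type*} [CommSemiring R] (p : R[X]) (i : ℕ) :
    ((X + 1) * derivative p).coeff i = i * p.coeff i + (i + 1) * p.coeff (i + 1) := by
  rw [add_mul, one_mul, coeff_add, coeff_derivative]
  cases i with
  | zero => simp
  | succ i => rw [coeff_X_mul, coeff_derivative]; push_cast; ring

theorem jacobiX_lower (α β : ℝ) (n : ℕ) :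
    (X + 1) * derivative (jacobiX α β (n + 1)) - C ((n : ℝ) + 1) * jacobiX α β (n + 1) =
      C ((n : ℝ) + 1 + β) * jacobiX (α + 1) β n := by
  ext i
  simp only [coeff_sub, coeff_C_mul, coeff_X_add_one_mul_derivative, coeff_jacobiX]
  linear_combination jacobiCoeff_lower α β n i

theorem jacobiX_raise (α β : ℝ) (n : ℕ) :
    X * ((X + 1) * derivative (jacobiX α β n)) +
        (C ((n : ℝ) + β + 1) * X + C α * (X + 1)) * jacobiX α β n =
      C ((n : ℝ) + 1) * jacobiX (α - 1) β (n + 1) := by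
  set D := (X + 1) * derivative (jacobiX α β n) with hD
  ext i
  simp only [add_mul, mul_add, mul_assoc, one_mul, mul_one, coeff_add, coeff_C_mul]
  cases i with
  | zero =>
    simp only [coeff_X_mul_zero, coeff_jacobiX]
    linear_combination jacobiCoeff_raise_zero α β n
  | succ i =>
    simp only [coeff_X_mul, hD, coeff_X_add_one_mul_derivative, coeff_jacobiX]
    linear_combination jacobiCoeff_raise α β n i

noncomputable def zernikeNorm (μ : ℝ) (n : ℕ) : ℝ :=
  n.factorial / (ascPochhammer ℝ n).eval (μ + 1)

theorem zernikeNorm_succ (μ : ℝ) (n : ℕ) :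
    zernikeNorm μ (n + 1) = (n + 1) / (μ + 1) * zernikeNorm (μ + 1) n := by
  rw [zernikeNorm, zernikeNorm, ascPochhammer_succ_eval_left, Nat.factorial_succ, div_mul_div_comm]
  push_cast
  rfl

theorem mul_zernikeNorm_sub_one_succ {μ : ℝ} (hμ : μ ≠ 0) (n : ℕ) :
    μ * zernikeNorm (μ - 1) (n + 1) = (n + 1) * zernikeNorm μ n := by
  rw [zernikeNorm, zernikeNorm, sub_add_cancel, ascPochhammer_succ_eval_left, Nat.factorial_succ]
  push_cast
  field_simp

noncomputable def zernikeRadial (μ β : ℝ) (n : ℕ) : ℝ[X] :=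
  C (zernikeNorm μ n) * jacobiX μ β n

theorem zernikeRadial_lower (μ : ℝ) (n a b : ℕ) (hab : a = 0 ∨ b = 0) :
    C (a : ℝ) * zernikeRadial μ (a + b : ℕ) (n + 1) +
        (X + 1) * derivative (zernikeRadial μ (a + b : ℕ) (n + 1)) -
        C ((n + 1 + a : ℕ) : ℝ) * zernikeRadial μ (a + b : ℕ) (n + 1) =
      C (((n + 1 + a : ℕ) : ℝ) * ((n + 1 + b : ℕ) : ℝ) / (μ + 1)) *
        zernikeRadial (μ + 1) (a + b : ℕ) n := by
  have hnorm : zernikeNorm μ (n + 1) * ((n : ℝ) + 1 + (a + b : ℕ)) =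
      ((n + 1 + a : ℕ) * (n + 1 + b : ℕ) / (μ + 1)) * zernikeNorm (μ + 1) n := by
    rw [zernikeNorm_succ]
    rcases hab with rfl | rfl <;> push_cast <;> ring
  have hC := congrArg C hnorm
  have lower := jacobiX_lower μ (a + b : ℕ) n
  rw [zernikeRadial, zernikeRadial, derivative_C_mul]
  simp only [Nat.cast_add, Nat.cast_one, map_add, map_mul, map_one, map_natCast] at hC lower ⊢
  linear_combination C (zernikeNorm μ (n + 1)) * lower + jacobiX (μ + 1) (a + b) n * hC

theorem zernikeRadial_raise {μ : ℝ} (hμ : μ ≠ 0) (β : ℝ) (n : ℕ) :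
    X * ((X + 1) * derivative (zernikeRadial μ β n)) +
        (C ((n : ℝ) + β + 1) * X + C μ * (X + 1)) * zernikeRadial μ β n =
      C μ * zernikeRadial (μ - 1) β (n + 1) := by
  have hC := congrArg C (mul_zernikeNorm_sub_one_succ hμ n)
  have raise := jacobiX_raise μ β n
  rw [zernikeRadial, zernikeRadial, derivative_C_mul]
  simp only [map_add, map_mul, map_one, map_natCast] at hC raise ⊢
  linear_combination C (zernikeNorm μ n) * raise - jacobiX (μ - 1) β (n + 1) * hC

end Jacobi

section Zernike

open MvPolynomial

local notation "ρ" => Polynomial.aeval (R := ℝ) (X 0 * X 1 - 1 : MvPolynomial (Fin 2) ℂ)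

theorem C_ofReal_eq_aeval_C (r : ℝ) : (C (r : ℂ) : MvPolynomial (Fin 2) ℂ) = ρ (Polynomial.C r) :=
  (Polynomial.aeval_C _ r).symm

theorem zernikeQ_add_add (μ : ℝ) (n a b : ℕ) (hab : a = 0 ∨ b = 0) :
    zernikeQ μ (n + a) (n + b) =
      X 0 ^ a * X 1 ^ b * ρ (zernikeRadial μ (a + b : ℕ) n) := by
  have hρ : ∀ β : ℝ, Polynomial.aeval (2 * X 0 * X 1 - 1 : MvPolynomial (Fin 2) ℂ) (jacobiP μ β n) =
      ρ (jacobiX μ β n) := fun β => by rw [mul_assoc, aeval_jacobiP]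
  by_cases hb : b = 0
  · subst hb
    rw [zernikeQ, if_pos (by omega)]
    simp only [add_zero, add_tsub_cancel_left, pow_zero, mul_one, hρ, zernikeRadial, zernikeNorm,
      map_mul, ← C_ofReal_eq_aeval_C]
    ring
  · obtain rfl : a = 0 := hab.resolve_right hb
    rw [zernikeQ, if_neg (by omega)]
    simp only [add_zero, zero_add, add_tsub_cancel_left, pow_zero, one_mul, hρ, zernikeRadial,
      zernikeNorm, map_mul, ← C_ofReal_eq_aeval_C]
    ring

theorem pderiv_zero_aeval (q : Polynomial ℝ) :
    pderiv 0 (ρ q) = X 1 * ρ (Polynomial.derivative q) := by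
  rw [← Derivation.restrictScalars_apply ℝ, Derivation.map_aeval, Derivation.restrictScalars_apply]
  simp [smul_eq_mul, mul_comm]

theorem X_mul_pderiv_X_pow_mul_X_pow_mul_aeval (a b : ℕ) (q : Polynomial ℝ) :
    X 0 * pderiv 0 (X 0 ^ a * X 1 ^ b * ρ q) =
      X 0 ^ a * X 1 ^ b *
        ρ (Polynomial.C (a : ℝ) * q + (Polynomial.X + 1) * Polynomial.derivative q) := by
  have euler : (X 0 : MvPolynomial (Fin 2) ℂ) * pderiv 0 (X 0 ^ a) =
      (a : MvPolynomial (Fin 2) ℂ) * X 0 ^ a := by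
    cases a with
    | zero => simp
    | succ a => rw [pderiv_pow, pderiv_X_self, Nat.add_sub_cancel, pow_succ]; push_cast; ring
  have constant_in_z : pderiv 0 (X 1 ^ b : MvPolynomial (Fin 2) ℂ) = 0 := by
    rw [pderiv_pow, pderiv_X_of_ne (by decide), mul_zero]
  simp only [pderiv_mul, pderiv_zero_aeval, constant_in_z, map_add, map_mul, Polynomial.aeval_X,
    map_one, map_natCast]
  linear_combination X 1 ^ b * ρ q * euler

theorem zernikeQ_lower (μ : ℝ) (n a b : ℕ) (hab : a = 0 ∨ b = 0) :
    X 0 * pderiv 0 (zernikeQ μ (n + a + 1) (n + b + 1)) -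
        C (((n + a + 1 : ℕ) : ℝ) : ℂ) * zernikeQ μ (n + a + 1) (n + b + 1) =
      C ((((n + a + 1 : ℕ) : ℝ) * ((n + b + 1 : ℕ) : ℝ) / (μ + 1) : ℝ) : ℂ) *
        zernikeQ (μ + 1) (n + a) (n + b) := by
  have lower := congrArg (X 0 ^ a * X 1 ^ b * ρ ·) (zernikeRadial_lower μ n a b hab)
  rw [Nat.add_right_comm n a 1, Nat.add_right_comm n b 1, zernikeQ_add_add μ (n + 1) a b hab,
    zernikeQ_add_add (μ + 1) n a b hab, X_mul_pderiv_X_pow_mul_X_pow_mul_aeval,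
    C_ofReal_eq_aeval_C, C_ofReal_eq_aeval_C]
  simp only [map_add, map_sub, map_mul] at lower ⊢
  linear_combination lower

theorem zernikeQ_raise {μ : ℝ} (hμ : μ ≠ 0) (n a b : ℕ) (hab : a = 0 ∨ b = 0) :
    (1 - X 0 * X 1) * (X 0 * pderiv 0 (zernikeQ μ (n + a) (n + b))) +
        (C ((((n + b : ℕ) : ℝ) + 1 : ℝ) : ℂ) * (1 - X 0 * X 1) - C (μ : ℂ) * (X 0 * X 1)) *
          zernikeQ μ (n + a) (n + b) =
      -(C (μ : ℂ) * zernikeQ (μ - 1) (n + a + 1) (n + b + 1)) := by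
  have raise := congrArg (X 0 ^ a * X 1 ^ b * ρ ·) (zernikeRadial_raise hμ (a + b : ℕ) n)
  rw [Nat.add_right_comm n a 1, Nat.add_right_comm n b 1, zernikeQ_add_add μ n a b hab,
    zernikeQ_add_add (μ - 1) (n + 1) a b hab, X_mul_pderiv_X_pow_mul_X_pow_mul_aeval,
    C_ofReal_eq_aeval_C, C_ofReal_eq_aeval_C]
  simp only [map_add, map_mul, map_one, map_natCast, Nat.cast_add, Polynomial.aeval_X,
    Polynomial.aeval_C] at raise ⊢
  linear_combination -raise

end Zernike

open MvPolynomial in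
theorem zernike_ladder_Z7 (μ : ℝ) (k j : ℕ) :
    (μ > -1 → 1 ≤ k → 1 ≤ j →
      X 0 * pderiv (0 : Fin 2) (zernikeQ μ k j) - C (((k : ℝ)) : ℂ) * zernikeQ μ k j =
        C ((((k : ℝ) * (j : ℝ) / (μ + 1) : ℝ)) : ℂ) * zernikeQ (μ + 1) (k - 1) (j - 1)) ∧
    (μ > 0 →
      (1 - X 0 * X 1) * (X 0 * pderiv (0 : Fin 2) (zernikeQ μ k j)) +
          (C ((((j : ℝ) + 1 : ℝ)) : ℂ) * (1 - X 0 * X 1) -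
            C ((μ : ℂ)) * (X 0 * X 1)) * zernikeQ μ k j =
        -(C ((μ : ℂ)) * zernikeQ (μ - 1) (k + 1) (j + 1))) := by
  refine ⟨fun _ hk hj => ?_, fun hμ => ?_⟩
  · obtain ⟨n, a, b, hab, rfl, rfl⟩ :
        ∃ n a b, (a = 0 ∨ b = 0) ∧ k = n + a + 1 ∧ j = n + b + 1 :=
      ⟨min k j - 1, k - j, j - k, by omega, by omega, by omega⟩
    simpa only [Nat.add_sub_cancel] using zernikeQ_lower μ n a b hab
  · obtain ⟨n, a, b, hab, rfl, rfl⟩ : ∃ n a b, (a = 0 ∨ b = 0) ∧ k = n + a ∧ j = n + b :=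
      ⟨min k j, k - j, j - k, by omega, by omega, by omega⟩
    exact zernikeQ_raise hμ.ne' n a b hab
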